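/- arXiv:1805.07844 — 4 statements merged into one kernel-verified Lean document; each statement's English description precedes it below -/
import Mathlib

section
/- Let φ be a norm on a finite-dimensional inner product space that is decomposable with respect to a subspace pair (M, M̄⊥) with M ⊆ M̄, i.e., φ(x+y) = φ(x) + φ(y) for all x ∈ M, y ∈ M̄⊥. Let θ⋆ be arbitrary, and let θ satisfy φ(θ) ≤ φ(θ⋆). Then with Δ = θ - θ⋆, φ(Π_{M̄⊥}(Δ)) ≤ φ(Π_{M̄}(Δ)) + 2φ(Π_{M⊥}(θ⋆)), where Π_S denotes orthogonal projection onto S. -/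
/-!
Write `θ⋆ = a + b` and `Δ = c + d` along `M ⊕ Mᗮ` and `M̄ ⊕ M̄ᗮ`. Then `a + d = θ - b - c`, so
decomposability and the triangle inequality give
`φ a + φ d = φ (a + d) ≤ φ θ + φ b + φ c ≤ φ θ⋆ + φ b + φ c ≤ φ a + 2 φ b + φ c`.
-/

theorem le_add_two_mul_of_decomposable {G : Type*} [AddCommGroup G] {φ : G → ℝ}
    (hφ_triangle : ∀ x y, φ (x + y) ≤ φ x + φ y) (hφ_neg : ∀ x, φ (-x) = φ x)
    {θ θstar a b c d : G} (hθ : φ θ ≤ φ θstar) (hθstar : a + b = θstar) (hΔ : c + d = θ - θstar)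
    (hdecomp : φ (a + d) = φ a + φ d) :
    φ d ≤ φ c + 2 * φ b := by
  have hθ_eq : θ = a + b + (c + d) := by rw [hθstar, hΔ]; abel
  have hsplit : φ (a + d) ≤ φ θ + (φ b + φ c) :=
    calc φ (a + d) = φ (θ + -(b + c)) := by rw [hθ_eq]; congr 1; abel
      _ ≤ φ θ + φ (b + c) := (hφ_triangle _ _).trans_eq (by rw [hφ_neg])
      _ ≤ φ θ + (φ b + φ c) := by gcongr; exact hφ_triangle b c
  have hθstar_le : φ θstar ≤ φ a + φ b := hθstar ▸ hφ_triangle a b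
  linarith

theorem decomposable_cone_general {E : Type*} [NormedAddCommGroup E] [InnerProductSpace ℝ E]
    [FiniteDimensional ℝ E]
    (M Mbar : Submodule ℝ E)
    (φ : E → ℝ)
    (hφ_triangle : ∀ x y, φ (x + y) ≤ φ x + φ y)
    (hφ_neg : ∀ x, φ (-x) = φ x)
    (hdecomp : ∀ x ∈ M, ∀ y ∈ Mbarᗮ, φ (x + y) = φ x + φ y)
    (θ θstar : E) (hθ : φ θ ≤ φ θstar) :
    φ ((Submodule.orthogonalProjectionOnto Mbarᗮ (θ - θstar) : E)) ≤
      φ ((Submodule.orthogonalProjectionOnto Mbar (θ - θstar) : E)) +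
        2 * φ ((Submodule.orthogonalProjectionOnto Mᗮ θstar : E)) :=
  le_add_two_mul_of_decomposable hφ_triangle hφ_neg hθ
    (M.starProjection_add_starProjection_orthogonal θstar)
    (Mbar.starProjection_add_starProjection_orthogonal (θ - θstar))
    (hdecomp _ (Submodule.orthogonalProjectionOnto M θstar).2 _
      (Submodule.orthogonalProjectionOnto Mbarᗮ (θ - θstar)).2)

/-- Decomposability cone lemma: if `φ` is a norm decomposable with respect to `(M, M̄ᗮ)` and
`φ θ ≤ φ θ⋆`, then the error `Δ = θ - θ⋆` satisfies
`φ(Π_{M̄ᗮ} Δ) ≤ φ(Π_{M̄} Δ) + 2 φ(Π_{Mᗮ} θ⋆)`. -/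
theorem decomposable_cone {E : Type*} [NormedAddCommGroup E] [InnerProductSpace ℝ E]
    [FiniteDimensional ℝ E]
    (M Mbar : Submodule ℝ E) (hMM : M ≤ Mbar)
    (φ : E → ℝ)
    (hφ_nonneg : ∀ x, 0 ≤ φ x)
    (hφ_triangle : ∀ x y, φ (x + y) ≤ φ x + φ y)
    (hφ_neg : ∀ x, φ (-x) = φ x)
    (hdecomp : ∀ x ∈ M, ∀ y ∈ Mbarᗮ, φ (x + y) = φ x + φ y)
    (θ θstar : E) (hθ : φ θ ≤ φ θstar) :
    φ ((Submodule.orthogonalProjectionOnto Mbarᗮ (θ - θstar) : E)) ≤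
      φ ((Submodule.orthogonalProjectionOnto Mbar (θ - θstar) : E)) +
        2 * φ ((Submodule.orthogonalProjectionOnto Mᗮ θstar : E)) :=
  decomposable_cone_general M Mbar φ hφ_triangle hφ_neg hdecomp θ θstar hθ
end

section
/- Under decomposability of φ with respect to (M, M̄⊥), if φ(θ) ≤ φ(θ⋆) and Δ = θ - θ⋆, then φ(Δ) ≤ 2φ(Π_{M̄}(Δ)) + 2φ(Π_{M⊥}(θ⋆)). -/
/-!
Write `θ⋆ = a + b` with `a = Π_M θ⋆`, `b = Π_{Mᗮ} θ⋆`, and `Δ = c + d` with `c = Π_{M̄} Δ`,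
`d = Π_{M̄ᗮ} Δ`. Decomposability splits `φ (a + d) = φ a + φ d`, and `a + d = θ - b - c`, so
`φ a + φ d ≤ φ θ + φ b + φ c ≤ φ θ⋆ + φ b + φ c ≤ φ a + 2 φ b + φ c`. This cone condition
`φ d ≤ φ c + 2 φ b` together with `φ Δ ≤ φ c + φ d` gives the bound.
-/

section Cone

variable {E : Type*} [AddCommGroup E] {φ : E → ℝ}

theorem apply_sub_sub_le_add_add (hφ_triangle : ∀ x y, φ (x + y) ≤ φ x + φ y)
    (hφ_neg : ∀ x, φ (-x) = φ x) (x y z : E) : φ (x - y - z) ≤ φ x + φ y + φ z := by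
  calc φ (x - y - z) = φ (x + -y + -z) := by simp only [sub_eq_add_neg]
    _ ≤ φ (x + -y) + φ (-z) := hφ_triangle _ _
    _ ≤ φ x + φ (-y) + φ (-z) := by gcongr; exact hφ_triangle _ _
    _ = φ x + φ y + φ z := by rw [hφ_neg, hφ_neg]

theorem decomposable_cone_s4 (hφ_triangle : ∀ x y, φ (x + y) ≤ φ x + φ y)
    (hφ_neg : ∀ x, φ (-x) = φ x) {a b c d : E} (hdecomp : φ (a + d) = φ a + φ d)
    (hθ : φ (a + b + (c + d)) ≤ φ (a + b)) : φ d ≤ φ c + 2 * φ b := by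
  have hsplit : φ (a + d) ≤ φ (a + b + (c + d)) + φ b + φ c := by
    have h := apply_sub_sub_le_add_add hφ_triangle hφ_neg (a + b + (c + d)) b c
    rwa [show a + b + (c + d) - b - c = a + d by abel] at h
  linarith [hφ_triangle a b]

end Cone

theorem decomposable_error_bound_general {E : Type*} [NormedAddCommGroup E] [InnerProductSpace ℝ E]
    [FiniteDimensional ℝ E]
    (M Mbar : Submodule ℝ E)
    (φ : E → ℝ)
    (hφ_triangle : ∀ x y, φ (x + y) ≤ φ x + φ y)
    (hφ_neg : ∀ x, φ (-x) = φ x)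
    (hdecomp : ∀ x ∈ M, ∀ y ∈ Mbarᗮ, φ (x + y) = φ x + φ y)
    (θ θstar : E) (hθ : φ θ ≤ φ θstar) :
    φ (θ - θstar) ≤
      2 * φ ((Submodule.orthogonalProjectionOnto Mbar (θ - θstar) : E)) +
        2 * φ ((Submodule.orthogonalProjectionOnto Mᗮ θstar : E)) := by
  have hstar := M.starProjection_add_starProjection_orthogonal θstar
  have hΔ := Mbar.starProjection_add_starProjection_orthogonal (θ - θstar)
  have hcone := decomposable_cone_s4 hφ_triangle hφ_neg
    (hdecomp _ (M.starProjection_apply_mem θstar) _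
      (Mbarᗮ.starProjection_apply_mem (θ - θstar)))
    (by rwa [hstar, hΔ, add_sub_cancel])
  have hsplit := hφ_triangle (Mbar.starProjection (θ - θstar)) (Mbarᗮ.starProjection (θ - θstar))
  rw [hΔ] at hsplit
  simp only [Submodule.starProjection_apply] at hcone hsplit ⊢
  linarith

/-- Under decomposability of `φ` with respect to `(M, M̄ᗮ)`, if `φ θ ≤ φ θ⋆` then the error
`Δ = θ - θ⋆` satisfies `φ Δ ≤ 2 φ(Π_{M̄} Δ) + 2 φ(Π_{Mᗮ} θ⋆)`. -/
theorem decomposable_error_bound {E : Type*} [NormedAddCommGroup E] [InnerProductSpace ℝ E]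
    [FiniteDimensional ℝ E]
    (M Mbar : Submodule ℝ E) (hMM : M ≤ Mbar)
    (φ : E → ℝ)
    (hφ_nonneg : ∀ x, 0 ≤ φ x)
    (hφ_triangle : ∀ x y, φ (x + y) ≤ φ x + φ y)
    (hφ_neg : ∀ x, φ (-x) = φ x)
    (hdecomp : ∀ x ∈ M, ∀ y ∈ Mbarᗮ, φ (x + y) = φ x + φ y)
    (θ θstar : E) (hθ : φ θ ≤ φ θstar) :
    φ (θ - θstar) ≤
      2 * φ ((Submodule.orthogonalProjectionOnto Mbar (θ - θstar) : E)) +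
        2 * φ ((Submodule.orthogonalProjectionOnto Mᗮ θstar : E)) :=
  decomposable_error_bound_general M Mbar φ hφ_triangle hφ_neg hdecomp θ θstar hθ
end

section
/- If X and Y are matrices in ℝ^{d×d} whose column spaces are orthogonal and whose row spaces are orthogonal, then ‖X + Y‖_* = ‖X‖_* + ‖Y‖_*, where ‖·‖_* denotes the nuclear norm. -/
/-!
Write `A = XᵀX` and `B = YᵀY`. Orthogonality of the column spaces gives
`(X + Y)ᵀ(X + Y) = A + B`, and orthogonality of the row spaces gives `AB = 0`.
For positive semidefinite `A`, `B` with `AB = 0` the square roots also annihilate each other,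
so `(√A + √B)² = A + B` and hence `√(A + B) = √A + √B`; taking traces gives the claim.
-/

/-- The positive semidefinite square root of a positive semidefinite matrix
(the definition `Matrix.PosSemidef.sqrt` of the older Mathlib, since removed). -/
noncomputable def posSemidefSqrtOld {n : Type*} [Fintype n] [DecidableEq n]
    {A : Matrix n n ℝ} (hA : A.PosSemidef) : Matrix n n ℝ :=
  hA.1.eigenvectorUnitary.1 * Matrix.diagonal ((↑) ∘ (√·) ∘ hA.1.eigenvalues) *
    (star hA.1.eigenvectorUnitary : Matrix n n ℝ)

/-- Nuclear norm: sum of singular values, i.e. the trace of `√(AᵀA)`. -/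
noncomputable def nuclearNorm {m n : ℕ} (A : Matrix (Fin m) (Fin n) ℝ) : ℝ :=
  (posSemidefSqrtOld (Matrix.posSemidef_conjTranspose_mul_self A)).trace

open scoped MatrixOrder ComplexOrder

lemma IsSelfAdjoint.mul_eq_zero_symm {R : Type*} [NonUnitalNonAssocRing R] [StarRing R]
    {a b : R} (ha : IsSelfAdjoint a) (hb : IsSelfAdjoint b) (hab : a * b = 0) : b * a = 0 :=
  (ha.commute_of_mul_eq_zero hb hab).eq ▸ hab

namespace Matrix

lemma transpose_add_mul_add_of_transpose_mul_eq_zero {m n R : Type*} [Fintype m] [CommRing R]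
    {X Y : Matrix m n R} (h : Xᵀ * Y = 0) : (X + Y)ᵀ * (X + Y) = Xᵀ * X + Yᵀ * Y := by
  have h' : Yᵀ * X = 0 := by simpa only [transpose_mul, transpose_transpose, transpose_zero] using congrArg transpose h
  rw [transpose_add, Matrix.add_mul, Matrix.mul_add, Matrix.mul_add, h, h']
  abel

variable {n 𝕜 : Type*} [Fintype n] [DecidableEq n] [RCLike 𝕜]

/-- `(√A)ᴴ √A B = AB`, and `Mᴴ M B = 0` forces `M B = 0`. -/
lemma cfcSqrt_mul_eq_zero_of_mul_eq_zero {A B : Matrix n n 𝕜} (hA : 0 ≤ A) (hAB : A * B = 0) :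
    CFC.sqrt A * B = 0 := by
  rwa [← conjTranspose_mul_self_mul_eq_zero, ← star_eq_conjTranspose,
    (CFC.sqrt_nonneg A).isSelfAdjoint.star_eq, CFC.sqrt_mul_sqrt_self A hA]

lemma cfcSqrt_mul_cfcSqrt_eq_zero {A B : Matrix n n 𝕜} (hA : 0 ≤ A) (hB : 0 ≤ B)
    (hAB : A * B = 0) : CFC.sqrt A * CFC.sqrt B = 0 := by
  have hB_sqrtA : B * CFC.sqrt A = 0 :=
    (CFC.sqrt_nonneg A).isSelfAdjoint.mul_eq_zero_symm hB.isSelfAdjoint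
      (cfcSqrt_mul_eq_zero_of_mul_eq_zero hA hAB)
  exact (CFC.sqrt_nonneg B).isSelfAdjoint.mul_eq_zero_symm (CFC.sqrt_nonneg A).isSelfAdjoint
    (cfcSqrt_mul_eq_zero_of_mul_eq_zero hB hB_sqrtA)

lemma cfcSqrt_add_of_mul_eq_zero {A B : Matrix n n 𝕜} (hA : 0 ≤ A) (hB : 0 ≤ B)
    (hAB : A * B = 0) : CFC.sqrt (A + B) = CFC.sqrt A + CFC.sqrt B := by
  have hBA : B * A = 0 := hA.isSelfAdjoint.mul_eq_zero_symm hB.isSelfAdjoint hAB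
  refine CFC.sqrt_unique ?_ (add_nonneg (CFC.sqrt_nonneg A) (CFC.sqrt_nonneg B))
  rw [add_mul, mul_add, mul_add, cfcSqrt_mul_cfcSqrt_eq_zero hA hB hAB,
    cfcSqrt_mul_cfcSqrt_eq_zero hB hA hBA, CFC.sqrt_mul_sqrt_self A hA,
    CFC.sqrt_mul_sqrt_self B hB, add_zero, zero_add]

end Matrix

open Matrix

lemma posSemidefSqrtOld_eq_cfcSqrt {n : Type*} [Fintype n] [DecidableEq n]
    {A : Matrix n n ℝ} (hA : A.PosSemidef) : posSemidefSqrtOld hA = CFC.sqrt A := by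
  rw [CFC.sqrt_eq_cfc, cfc_nnreal_eq_real _ A, hA.1.cfc_eq]
  simp [IsHermitian.cfc, posSemidefSqrtOld, Function.comp_def, hA.eigenvalues_nonneg]

lemma nuclearNorm_eq_trace_cfcSqrt {m n : ℕ} (A : Matrix (Fin m) (Fin n) ℝ) :
    nuclearNorm A = (CFC.sqrt (Aᵀ * A)).trace := by
  rw [nuclearNorm, posSemidefSqrtOld_eq_cfcSqrt, conjTranspose_eq_transpose_of_trivial]

/-- Decomposability of the nuclear norm: if `X` and `Y` have orthogonal column spaces
(`XᵀY = 0`) and orthogonal row spaces (`XYᵀ = 0`), then `‖X+Y‖_* = ‖X‖_* + ‖Y‖_*`. -/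
theorem nuclearNorm_add_of_orthogonal {d : ℕ} (X Y : Matrix (Fin d) (Fin d) ℝ)
    (hcol : X.transpose * Y = 0) (hrow : X * Y.transpose = 0) :
    nuclearNorm (X + Y) = nuclearNorm X + nuclearNorm Y := by
  have hX : 0 ≤ Xᵀ * X := (posSemidef_conjTranspose_mul_self X).nonneg
  have hY : 0 ≤ Yᵀ * Y := (posSemidef_conjTranspose_mul_self Y).nonneg
  have hXY : (Xᵀ * X) * (Yᵀ * Y) = 0 := by
    rw [Matrix.mul_assoc, ← Matrix.mul_assoc X, hrow, Matrix.zero_mul, Matrix.mul_zero]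
  rw [nuclearNorm_eq_trace_cfcSqrt, nuclearNorm_eq_trace_cfcSqrt, nuclearNorm_eq_trace_cfcSqrt,
    transpose_add_mul_add_of_transpose_mul_eq_zero hcol, cfcSqrt_add_of_mul_eq_zero hX hY hXY,
    trace_add]
end

section
/- Let f = (1/n)∑ f_i with each f_i convex and L-smooth, and let θ̂ minimize f over a convex set containing z and y. For an index j drawn uniformly from {1,…,n}, the variance-reduced gradient direction satisfies E_j[‖∇f_j(z) - ∇f_j(y) + ∇f(y) - ∇f(z)‖²] ≤ 4L( [f(z) - f(θ̂)] + [f(y) - f(θ̂)] ), using that ⟨∇f(θ̂), x - θ̂⟩ ≥ 0 for all feasible x. -/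
/-!
Centering a random vector can only decrease its second moment, so the left side is at most the
mean of `‖∇f_j(z) - ∇f_j(y)‖²`. Splitting this difference through `∇f_j(θ̂)` and using
co-coercivity of gradients of convex `L`-smooth functions, `‖∇f_j(x) - ∇f_j(θ̂)‖² ≤ 2L D_j(x, θ̂)`
with `D_j` the Bregman divergence of `f_j`, bounds it by `4L` times the mean of
`D_j(z, θ̂) + D_j(y, θ̂)`. The Bregman divergence is linear in the function, so this mean is
`D_f(z, θ̂) + D_f(y, θ̂)`, and first-order optimality `⟪∇f(θ̂), x - θ̂⟫ ≥ 0` gives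
`D_f(x, θ̂) ≤ f(x) - f(θ̂)`.
-/

open RealInnerProductSpace Finset

theorem ConvexOn.add_apply_sub_le_of_hasFDerivAt {E : Type*} [NormedAddCommGroup E]
    [NormedSpace ℝ E] {s : Set E} {φ : E → ℝ} {φ' : E →L[ℝ] ℝ} {w u : E}
    (hφ : ConvexOn ℝ s φ) (hw : w ∈ s) (hu : u ∈ s) (hφ' : HasFDerivAt φ φ' w) :
    φ w + φ' (u - w) ≤ φ u := by
  let ℓ : ℝ →ᵃ[ℝ] E := AffineMap.lineMap w u
  have hφ'ℓ : HasFDerivAt φ φ' (ℓ 0) := by simpa [ℓ] using hφ'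
  have := (hφ.comp_affineMap ℓ).le_slope_of_hasDerivAt (by simpa [ℓ] using hw)
    (by simpa [ℓ] using hu) zero_lt_one (hφ'ℓ.comp_hasDerivAt 0 AffineMap.hasDerivAt_lineMap)
  simp only [slope_def_field, Function.comp_apply, ℓ, AffineMap.lineMap_apply_zero,
    AffineMap.lineMap_apply_one, sub_zero, div_one] at this
  linarith

theorem le_two_mul_mul_of_forall_sub_sq_le {L a D : ℝ} (hL : 0 ≤ L)
    (h : ∀ t : ℝ, t * a - L / 2 * t ^ 2 * a ≤ D) : a ≤ 2 * L * D := by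
  rcases hL.eq_or_lt with rfl | hL
  · by_contra! ha
    rw [mul_zero, zero_mul] at ha
    have := h ((D + 1) / a)
    rw [div_mul_cancel₀ _ ha.ne'] at this
    linarith
  · have := h L⁻¹
    field_simp at this
    linarith

section InnerProductSpace

variable {E : Type*} [NormedAddCommGroup E] [InnerProductSpace ℝ E]

def bregman (φ : E → ℝ) (G : E → E) (x w : E) : ℝ := φ x - φ w - ⟪G w, x - w⟫

theorem sum_norm_sub_average_sq_le {ι : Type*} (s : Finset ι) (X : ι → E) :
    ∑ i ∈ s, ‖X i - (#s : ℝ)⁻¹ • ∑ j ∈ s, X j‖ ^ 2 ≤ ∑ i ∈ s, ‖X i‖ ^ 2 := by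
  set c : ℝ := (#s : ℝ)
  have hc : c * c⁻¹ ^ 2 = c⁻¹ := by
    rcases eq_or_ne c 0 with h | h <;> simp [h, sq]
  have hexpand : ∑ i ∈ s, ‖X i - c⁻¹ • ∑ j ∈ s, X j‖ ^ 2
      = ∑ i ∈ s, ‖X i‖ ^ 2 - c⁻¹ * ‖∑ j ∈ s, X j‖ ^ 2 := by
    simp only [norm_sub_sq_real, sum_add_distrib, sum_sub_distrib, ← mul_sum, ← sum_inner,
      sum_const, nsmul_eq_mul, real_inner_smul_right, real_inner_self_eq_norm_sq, norm_smul,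
      mul_pow, Real.norm_eq_abs, sq_abs]
    linear_combination ‖∑ j ∈ s, X j‖ ^ 2 * hc
  rw [hexpand]
  have : 0 ≤ c⁻¹ * ‖∑ j ∈ s, X j‖ ^ 2 := by positivity
  linarith

theorem bregman_eq_mul_sum {ι : Type*} (s : Finset ι) {φ : ι → E → ℝ} {G : ι → E → E}
    {f : E → ℝ} {g : E → E} {c : ℝ} (hf : ∀ x, f x = c * ∑ i ∈ s, φ i x)
    (hg : ∀ x, g x = c • ∑ i ∈ s, G i x) (x w : E) :
    bregman f g x w = c * ∑ i ∈ s, bregman (φ i) (G i) x w := by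
  simp only [bregman, hf, hg, sum_sub_distrib, ← sum_inner, real_inner_smul_left]
  ring

variable [CompleteSpace E] {φ : E → ℝ} {G : E → E} {L : ℝ}

theorem bregman_nonneg (hφ : ConvexOn ℝ Set.univ φ) (hG : ∀ x, HasGradientAt φ (G x) x)
    (x w : E) : 0 ≤ bregman φ G x w := by
  have := hφ.add_apply_sub_le_of_hasFDerivAt (Set.mem_univ w) (Set.mem_univ x) (hG w).hasFDerivAt
  rw [InnerProductSpace.toDual_apply_apply] at this
  rw [bregman]
  linarith

-- Co-coercivity of the gradient of a convex `L`-smooth function.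
theorem norm_sub_sq_le_two_mul_bregman (hL : 0 ≤ L) (hφ : ConvexOn ℝ Set.univ φ)
    (hG : ∀ x, HasGradientAt φ (G x) x)
    (hsmooth : ∀ x y, bregman φ G y x ≤ L / 2 * ‖y - x‖ ^ 2) (x w : E) :
    ‖G x - G w‖ ^ 2 ≤ 2 * L * bregman φ G x w := by
  refine le_two_mul_mul_of_forall_sub_sq_le hL fun t => ?_
  set v := G x - G w with hv
  -- the smoothness upper bound at `x` and the convexity lower bound at `w`, both evaluated at
  -- `x - t • v`; the optimal step is `t = 1 / L`
  have hupper := hsmooth x (x - t • v)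
  have hlower := bregman_nonneg hφ hG (x - t • v) w
  have hstep : x - t • v - w = (x - w) - t • v := by abel
  have hv2 : ⟪G x, v⟫ - ⟪G w, v⟫ = ‖v‖ ^ 2 := by
    rw [← inner_sub_left, ← hv, real_inner_self_eq_norm_sq]
  rw [bregman, sub_sub_cancel_left, inner_neg_right, real_inner_smul_right, norm_neg, norm_smul,
    mul_pow, Real.norm_eq_abs, sq_abs] at hupper
  rw [bregman, hstep, inner_sub_right, real_inner_smul_right] at hlower
  rw [bregman]
  linear_combination hupper + hlower - t * hv2

theorem norm_sub_sq_le_four_mul_bregman (hL : 0 ≤ L) (hφ : ConvexOn ℝ Set.univ φ)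
    (hG : ∀ x, HasGradientAt φ (G x) x)
    (hsmooth : ∀ x y, bregman φ G y x ≤ L / 2 * ‖y - x‖ ^ 2) (x y w : E) :
    ‖G x - G y‖ ^ 2 ≤ 4 * L * (bregman φ G x w + bregman φ G y w) := by
  have hx := norm_sub_sq_le_two_mul_bregman hL hφ hG hsmooth x w
  have hy := norm_sub_sq_le_two_mul_bregman hL hφ hG hsmooth y w
  calc ‖G x - G y‖ ^ 2 = ‖(G x - G w) - (G y - G w)‖ ^ 2 := by rw [sub_sub_sub_cancel_right]
    _ ≤ (‖G x - G w‖ + ‖G y - G w‖) ^ 2 := by gcongr; exact norm_sub_le _ _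
    _ ≤ 2 * (‖G x - G w‖ ^ 2 + ‖G y - G w‖ ^ 2) := add_sq_le
    _ ≤ 4 * L * (bregman φ G x w + bregman φ G y w) := by linarith

end InnerProductSpace

theorem svrg_variance_bound_general {d n : ℕ}
    (fi : Fin n → EuclideanSpace ℝ (Fin d) → ℝ)
    (gi : Fin n → EuclideanSpace ℝ (Fin d) → EuclideanSpace ℝ (Fin d))
    (f : EuclideanSpace ℝ (Fin d) → ℝ) (g : EuclideanSpace ℝ (Fin d) → EuclideanSpace ℝ (Fin d))
    (L : ℝ) (hL : 0 ≤ L)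
    (hdiff : ∀ i x, HasGradientAt (fi i) (gi i x) x)
    (hconv : ∀ i, ConvexOn ℝ Set.univ (fi i))
    (hsmooth : ∀ i x y, fi i y - fi i x - ⟪gi i x, y - x⟫ ≤ L / 2 * ‖y - x‖ ^ 2)
    (hf : ∀ x, f x = (n : ℝ)⁻¹ * ∑ i, fi i x)
    (hg : ∀ x, g x = (n : ℝ)⁻¹ • ∑ i, gi i x)
    (Ω : Set (EuclideanSpace ℝ (Fin d)))
    (θhat : EuclideanSpace ℝ (Fin d))
    (hopt : ∀ x ∈ Ω, ⟪g θhat, x - θhat⟫ ≥ 0)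
    (z y : EuclideanSpace ℝ (Fin d)) (hz : z ∈ Ω) (hy : y ∈ Ω) :
    (n : ℝ)⁻¹ * ∑ j, ‖gi j z - gi j y + g y - g z‖ ^ 2 ≤
      4 * L * ((f z - f θhat) + (f y - f θhat)) := by
  have hmean : g z - g y = (#(univ : Finset (Fin n)) : ℝ)⁻¹ • ∑ j, (gi j z - gi j y) := by
    rw [card_univ, Fintype.card_fin, sum_sub_distrib, smul_sub, ← hg, ← hg]
  have hgap : ∀ x ∈ Ω, bregman f g x θhat ≤ f x - f θhat := fun x hx => by
    rw [bregman]; linarith [hopt x hx]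
  calc (n : ℝ)⁻¹ * ∑ j, ‖gi j z - gi j y + g y - g z‖ ^ 2
      = (n : ℝ)⁻¹ * ∑ j, ‖(gi j z - gi j y) - (g z - g y)‖ ^ 2 := by
        simp only [sub_sub_eq_add_sub]
    _ ≤ (n : ℝ)⁻¹ * ∑ j, ‖gi j z - gi j y‖ ^ 2 := by
        rw [hmean]
        exact mul_le_mul_of_nonneg_left (sum_norm_sub_average_sq_le _ _) (by positivity)
    _ ≤ (n : ℝ)⁻¹ * ∑ j, 4 * L * (bregman (fi j) (gi j) z θhat + bregman (fi j) (gi j) y θhat) := by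
        gcongr with j
        exact norm_sub_sq_le_four_mul_bregman hL (hconv j) (hdiff j) (hsmooth j) z y θhat
    _ = 4 * L * (bregman f g z θhat + bregman f g y θhat) := by
        rw [bregman_eq_mul_sum univ hf hg, bregman_eq_mul_sum univ hf hg, ← mul_sum,
          sum_add_distrib]
        ring
    _ ≤ 4 * L * ((f z - f θhat) + (f y - f θhat)) := by
        gcongr
        exacts [hgap z hz, hgap y hy]

/-- Variance bound for the SVRG-style gradient estimator: for `f = (1/n)∑ fᵢ` with each `fᵢ`
convex and `L`-smooth, and `θ̂` a constrained minimizer of `f`,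
`E_j ‖∇f_j(z) - ∇f_j(y) + ∇f(y) - ∇f(z)‖² ≤ 4L([f(z) - f(θ̂)] + [f(y) - f(θ̂)])`. -/
theorem svrg_variance_bound {d n : ℕ} (hn : 0 < n)
    (fi : Fin n → EuclideanSpace ℝ (Fin d) → ℝ)
    (gi : Fin n → EuclideanSpace ℝ (Fin d) → EuclideanSpace ℝ (Fin d))
    (f : EuclideanSpace ℝ (Fin d) → ℝ) (g : EuclideanSpace ℝ (Fin d) → EuclideanSpace ℝ (Fin d))
    (L : ℝ) (hL : 0 ≤ L)
    (hdiff : ∀ i x, HasGradientAt (fi i) (gi i x) x)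
    (hconv : ∀ i, ConvexOn ℝ Set.univ (fi i))
    (hsmooth : ∀ i x y, fi i y - fi i x - ⟪gi i x, y - x⟫ ≤ L / 2 * ‖y - x‖ ^ 2)
    (hf : ∀ x, f x = (n : ℝ)⁻¹ * ∑ i, fi i x)
    (hg : ∀ x, g x = (n : ℝ)⁻¹ • ∑ i, gi i x)
    (Ω : Set (EuclideanSpace ℝ (Fin d))) (hΩ : Convex ℝ Ω)
    (θhat : EuclideanSpace ℝ (Fin d)) (hθhatΩ : θhat ∈ Ω)
    (hmin : ∀ x ∈ Ω, f θhat ≤ f x)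
    (hopt : ∀ x ∈ Ω, ⟪g θhat, x - θhat⟫ ≥ 0)
    (z y : EuclideanSpace ℝ (Fin d)) (hz : z ∈ Ω) (hy : y ∈ Ω) :
    (n : ℝ)⁻¹ * ∑ j, ‖gi j z - gi j y + g y - g z‖ ^ 2 ≤
      4 * L * ((f z - f θhat) + (f y - f θhat)) :=
  svrg_variance_bound_general fi gi f g L hL hdiff hconv hsmooth hf hg Ω θhat hopt z y hz hy
end
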